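/- Let 𝒪 be the ring of integers of an imaginary quadratic field F. Let b₁, b₂ ∈ 𝒪 be such that neither b₁ nor b₂ is divisible in 𝒪 by any natural number n > 1, and suppose that b₂ and N(b₁) := b₁·conj(b₁) generate the unit ideal, i.e. b₂𝒪 + N(b₁)𝒪 = 𝒪. Then b₁·b₂ is not divisible in 𝒪 by any natural number n > 1. -/

import Mathlib

/-!
Work in the ring `𝒪`. If a prime `p` divides `b₁ b₂` and also `N(b₁) ∈ ℤ`, then `p` divides
`b₁ = b₁ b₂ x + N(b₁) b₁ y`. Otherwise `p` is coprime to `N(b₁)` in `ℤ`, hence in `𝒪`, and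
since `p ∣ conj(b₁) b₁ b₂ = N(b₁) b₂` it divides `b₂`.
-/

noncomputable section

/-- ω = (d + √d)/2 where √d = i·√(-d) for the discriminant d < 0. -/
def omg (d : ℤ) : ℂ := ((d : ℂ) + Complex.I * (Real.sqrt (-(d : ℝ)) : ℝ)) / 2

/-- d is the discriminant of an imaginary quadratic field. -/
def IsDisc (d : ℤ) : Prop :=
  d < 0 ∧ ((d % 4 = 1 ∧ Squarefree d) ∨
    (d % 4 = 0 ∧ Squarefree (d / 4) ∧ (d / 4 % 4 = 2 ∨ d / 4 % 4 = 3)))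

/-- The ring of integers 𝒪 = ℤ + ℤω of the imaginary quadratic field of
discriminant d, as a subset of ℂ. -/
def Oint (d : ℤ) : Set ℂ := {z | ∃ a b : ℤ, z = (a : ℂ) + (b : ℂ) * omg d}

/-- Q is a nonzero ideal of 𝒪. -/
def IsIdealOf (d : ℤ) (Q : Set ℂ) : Prop :=
  Q ⊆ Oint d ∧ (0 : ℂ) ∈ Q ∧ (∃ q ∈ Q, q ≠ 0) ∧
    (∀ x ∈ Q, ∀ y ∈ Q, x + y ∈ Q) ∧ (∀ r ∈ Oint d, ∀ q ∈ Q, r * q ∈ Q)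

theorem dvd_or_dvd_of_isCoprime_of_mul_eq_intCast {R : Type*} [CommRing R] {p : ℕ}
    (hp : p.Prime) {b₁ b₁' b₂ : R} {m : ℤ} (hm : b₁ * b₁' = m)
    (hcop : IsCoprime b₂ (b₁ * b₁')) (h : (p : R) ∣ b₁ * b₂) :
    (p : R) ∣ b₁ ∨ (p : R) ∣ b₂ := by
  rcases dvd_or_isCoprime (p : ℤ) m (Nat.prime_iff_prime_int.mp hp).irreducible with hpm | hpm
  · left
    have hpN : (p : R) ∣ b₁ * b₁' := by
      simpa [hm] using map_dvd (Int.castRingHom R) hpm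
    obtain ⟨x, y, hxy⟩ := hcop
    have hb₁ : b₁ = x * (b₁ * b₂) + (b₁ * y) * (b₁ * b₁') := by linear_combination -b₁ * hxy
    rw [hb₁]
    exact h.linear_comb hpN _ _
  · right
    have hpN : IsCoprime (p : R) (b₁ * b₁') := by
      simpa [hm] using hpm.map (Int.castRingHom R)
    exact hpN.dvd_of_dvd_mul_left (by convert h.mul_left b₁' using 1; ring)

theorem four_mul_omg_sq {d : ℤ} (hd : d ≤ 0) :
    4 * omg d ^ 2 = 4 * d * omg d + (d - d ^ 2) := by
  have hsqrt : ((Real.sqrt (-(d : ℝ)) : ℝ) : ℂ) ^ 2 = -(d : ℂ) := by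
    rw [← Complex.ofReal_pow, Real.sq_sqrt (neg_nonneg.mpr (by exact_mod_cast hd))]
    push_cast; ring
  unfold omg
  linear_combination (Complex.I ^ 2) * hsqrt - (d : ℂ) * Complex.I_sq

theorem IsDisc.exists_omg_sq_eq {d : ℤ} (hd : IsDisc d) :
    ∃ c : ℤ, omg d ^ 2 = d * omg d + c := by
  obtain ⟨c, hc⟩ : (4 : ℤ) ∣ d - d ^ 2 := by
    obtain ⟨-, (⟨h, -⟩ | ⟨h, -⟩)⟩ := hd
    · obtain ⟨q, rfl⟩ : ∃ q, d = 4 * q + 1 := ⟨d / 4, by omega⟩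
      exact ⟨-4 * q ^ 2 - q, by ring⟩
    · obtain ⟨q, rfl⟩ : ∃ q, d = 4 * q := ⟨d / 4, by omega⟩
      exact ⟨q - 4 * q ^ 2, by ring⟩
  have hcC : (d : ℂ) - d ^ 2 = 4 * c := by exact_mod_cast hc
  refine ⟨c, ?_⟩
  linear_combination (four_mul_omg_sq hd.1.le + hcC) / 4

theorem star_omg (d : ℤ) : star (omg d) = d - omg d := by
  unfold omg
  simp only [Complex.star_def, map_div₀, map_add, map_mul, Complex.conj_I,
    Complex.conj_ofReal, map_intCast, map_ofNat]
  ring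

theorem star_mem_Oint {d : ℤ} {x : ℂ} (hx : x ∈ Oint d) : star x ∈ Oint d := by
  obtain ⟨a, b, rfl⟩ := hx
  refine ⟨a + b * d, -b, ?_⟩
  simp only [star_add, star_mul', star_intCast, star_omg]
  push_cast; ring

theorem IsDisc.exists_mul_star_eq_intCast {d : ℤ} (hd : IsDisc d) {x : ℂ} (hx : x ∈ Oint d) :
    ∃ m : ℤ, x * star x = m := by
  obtain ⟨c, hc⟩ := hd.exists_omg_sq_eq
  obtain ⟨a, b, rfl⟩ := hx
  refine ⟨a ^ 2 + a * b * d - b ^ 2 * c, ?_⟩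
  simp only [star_add, star_mul', star_intCast, star_omg]
  push_cast
  linear_combination -(b : ℂ) ^ 2 * hc

def IsDisc.ointSubring {d : ℤ} (hd : IsDisc d) : Subring ℂ where
  carrier := Oint d
  zero_mem' := ⟨0, 0, by simp⟩
  one_mem' := ⟨1, 0, by simp⟩
  add_mem' := by
    rintro _ _ ⟨a, b, rfl⟩ ⟨a', b', rfl⟩
    exact ⟨a + a', b + b', by push_cast; ring⟩
  neg_mem' := by
    rintro _ ⟨a, b, rfl⟩
    exact ⟨-a, -b, by push_cast; ring⟩
  mul_mem' := by
    obtain ⟨c, hc⟩ := hd.exists_omg_sq_eq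
    rintro _ _ ⟨a, b, rfl⟩ ⟨a', b', rfl⟩
    refine ⟨a * a' + b * b' * c, a * b' + a' * b + b * b' * d, ?_⟩
    push_cast
    linear_combination (b : ℂ) * b' * hc

theorem IsDisc.natCast_dvd_iff {d : ℤ} (hd : IsDisc d) (n : ℕ) (z : hd.ointSubring) :
    (n : hd.ointSubring) ∣ z ↔ ∃ y ∈ Oint d, (z : ℂ) = n * y := by
  constructor
  · rintro ⟨⟨y, hy⟩, h⟩
    exact ⟨y, hy, by simpa using congrArg Subtype.val h⟩
  · rintro ⟨y, hy, h⟩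
    exact ⟨⟨y, hy⟩, Subtype.ext (by simpa using h)⟩

/-- if b₁, b₂ are each not divisible by any natural number > 1 and
b₂𝒪 + N(b₁)𝒪 = 𝒪, then b₁b₂ is not divisible by any natural number > 1. -/
theorem stmt18 (d : ℤ) (hd : IsDisc d) (b₁ b₂ : ℂ)
    (h₁ : b₁ ∈ Oint d) (h₂ : b₂ ∈ Oint d)
    (hnd₁ : ∀ n : ℕ, 1 < n → ¬ ∃ y ∈ Oint d, b₁ = (n : ℂ) * y)
    (hnd₂ : ∀ n : ℕ, 1 < n → ¬ ∃ y ∈ Oint d, b₂ = (n : ℂ) * y)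
    (hcop : ∃ x ∈ Oint d, ∃ y ∈ Oint d, b₂ * x + (b₁ * star b₁) * y = 1) :
    ∀ n : ℕ, 1 < n → ¬ ∃ y ∈ Oint d, b₁ * b₂ = (n : ℂ) * y := by
  rintro n hn hdiv
  obtain ⟨p, hp, hpn⟩ := Nat.exists_prime_and_dvd (by omega : n ≠ 1)
  let a₁ : hd.ointSubring := ⟨b₁, h₁⟩
  let a₂ : hd.ointSubring := ⟨b₂, h₂⟩
  let a₁' : hd.ointSubring := ⟨star b₁, star_mem_Oint h₁⟩
  obtain ⟨m, hm⟩ := hd.exists_mul_star_eq_intCast h₁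
  have hnorm : a₁ * a₁' = m := Subtype.ext (by simpa [a₁, a₁'] using hm)
  have hcop' : IsCoprime a₂ (a₁ * a₁') := by
    obtain ⟨x, hx, y, hy, h⟩ := hcop
    exact ⟨⟨x, hx⟩, ⟨y, hy⟩, Subtype.ext (by simpa [a₁, a₁', a₂, mul_comm] using h)⟩
  have hp₁₂ : (p : hd.ointSubring) ∣ a₁ * a₂ :=
    (Nat.cast_dvd_cast hpn).trans ((hd.natCast_dvd_iff n (a₁ * a₂)).mpr hdiv)
  rcases dvd_or_dvd_of_isCoprime_of_mul_eq_intCast hp hnorm hcop' hp₁₂ with h | h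
  · exact hnd₁ p hp.one_lt ((hd.natCast_dvd_iff p a₁).mp h)
  · exact hnd₂ p hp.one_lt ((hd.natCast_dvd_iff p a₂).mp h)
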